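/- Let α ∈ (0,1), let H be a real Hilbert space, and let v : [0,T] → H be continuously differentiable. Then (v(t), D_t^α v(t))_H ≥ (1/2) D_t^α |v(t)|_H² for all t ∈ (0,T], where D_t^α denotes the Caputo fractional derivative. -/

import Mathlib

open MeasureTheory RealInnerProductSpace

/-- The left Caputo fractional derivative of order `α ∈ (0,1)` of a scalar function. -/
noncomputable def caputoDeriv (α : ℝ) (w : ℝ → ℝ) (t : ℝ) : ℝ :=
  (Real.Gamma (1 - α))⁻¹ * ∫ s in (0:ℝ)..t, (t - s) ^ (-α) * deriv w s

/-- The left Caputo fractional derivative of order `α ∈ (0,1)` of an `H`-valued function. -/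
noncomputable def caputoDerivVec {H : Type*} [NormedAddCommGroup H] [NormedSpace ℝ H]
    (α : ℝ) (v : ℝ → H) (t : ℝ) : H :=
  (Real.Gamma (1 - α))⁻¹ • ∫ s in (0:ℝ)..t, (t - s) ^ (-α) • deriv v s

/-!
With `w s = ‖v s - v t‖²`, the difference of the two sides is
`-(2 Γ(1-α))⁻¹ ∫₀ᵗ (t-s)^(-α) w'(s) ds`, so it suffices that this weighted integral of `w'` is
nonpositive for every `w ≥ 0` with `w t = 0`. Integrating by parts on `[0, b]` with `b < t`,
`∫₀ᵇ (t-s)^(-α) w' = (t-b)^(-α) w b - t^(-α) w 0 - α ∫₀ᵇ (t-s)^(-α-1) w ≤ (t-b)^(-α) w b`.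
Since `w` is Lipschitz and vanishes at `t`, the boundary term is `O((t-b)^(1-α))`, which tends
to `0` as `b → t` because `α < 1`.
-/

open Set Filter Topology intervalIntegral

section CaputoKernel

variable {α a t : ℝ}

theorem intervalIntegrable_sub_rpow_neg (hα : α < 1) :
    IntervalIntegrable (fun s => (t - s) ^ (-α)) volume a t := by
  have h := (intervalIntegrable_rpow' (a := t - a) (b := 0) (r := -α) (by linarith)).comp_sub_left t
  simpa only [sub_sub_cancel, sub_zero] using h

theorem intervalIntegrable_sub_rpow_neg_smul {E : Type*} [NormedAddCommGroup E] [NormedSpace ℝ E]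
    (hα : α < 1) {f : ℝ → E} (hf : ContinuousOn f (uIcc a t)) :
    IntervalIntegrable (fun s => (t - s) ^ (-α) • f s) volume a t :=
  (intervalIntegrable_sub_rpow_neg hα).smul_continuousOn hf

theorem integral_sub_rpow_neg_mul_deriv_le {b : ℝ} (hα : 0 ≤ α) (hab : a ≤ b) (hbt : b < t)
    {w w' : ℝ → ℝ} (hw : ContinuousOn w (Icc a b)) (hw' : ContinuousOn w' (Icc a b))
    (hderiv : ∀ s ∈ Ioo a b, HasDerivAt w (w' s) s) (hnonneg : ∀ s ∈ Icc a b, 0 ≤ w s) :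
    ∫ s in a..b, (t - s) ^ (-α) * w' s ≤ (t - b) ^ (-α) * w b := by
  have hpos : ∀ s ∈ Icc a b, 0 < t - s := fun s hs => by linarith [hs.2]
  have hkernel : ∀ s ∈ Icc a b,
      HasDerivAt (fun s => (t - s) ^ (-α)) (α * (t - s) ^ (-α - 1)) s := fun s hs => by
    convert ((hasDerivAt_id' s).const_sub t).rpow_const (p := -α) (Or.inl (hpos s hs).ne') using 1
    ring
  have hkernel' : ContinuousOn (fun s => α * (t - s) ^ (-α - 1)) (Icc a b) :=
    continuousOn_const.mul <| (continuousOn_const.sub continuousOn_id).rpow_const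
      fun s hs => Or.inl (hpos s hs).ne'
  rw [← uIcc_of_le hab] at hw hw' hkernel hkernel'
  have hparts := integral_mul_deriv_eq_deriv_mul_of_hasDerivAt
    (fun s hs => (hkernel s hs).continuousAt.continuousWithinAt) hw
    (fun s hs => hkernel s (Ioo_subset_Icc_self hs))
    (by rwa [min_eq_left hab, max_eq_right hab]) hkernel'.intervalIntegrable hw'.intervalIntegrable
  have hleft : 0 ≤ (t - a) ^ (-α) * w a :=
    mul_nonneg (Real.rpow_nonneg (hpos a ⟨le_rfl, hab⟩).le _) (hnonneg a ⟨le_rfl, hab⟩)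
  have hrest : 0 ≤ ∫ s in a..b, α * (t - s) ^ (-α - 1) * w s :=
    integral_nonneg hab fun s hs =>
      mul_nonneg (mul_nonneg hα (Real.rpow_nonneg (hpos s hs).le _)) (hnonneg s hs)
  linarith

theorem integral_sub_rpow_neg_mul_deriv_nonpos (hα0 : 0 ≤ α) (hα1 : α < 1) (hat : a < t)
    {w w' : ℝ → ℝ} (hw : ContinuousOn w (Icc a t)) (hw' : ContinuousOn w' (Icc a t))
    (hderiv : ∀ s ∈ Ioo a t, HasDerivAt w (w' s) s) (hnonneg : ∀ s ∈ Icc a t, 0 ≤ w s)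
    (hwt : w t = 0) :
    ∫ s in a..t, (t - s) ^ (-α) * w' s ≤ 0 := by
  obtain ⟨M, hM⟩ := isCompact_Icc.exists_bound_of_continuousOn hw'
  have hlinear : ∀ b ∈ Ioo a t, w b ≤ M * (t - b) := by
    intro b hb
    obtain ⟨c, hc, hslope⟩ := exists_hasDerivAt_eq_slope w w' hb.2
      (hw.mono (Icc_subset_Icc_left hb.1.le)) fun s hs => hderiv s ⟨hb.1.trans hs.1, hs.2⟩
    rw [hwt, eq_div_iff (sub_ne_zero.2 hb.2.ne')] at hslope
    have hMc : -M ≤ w' c := neg_le_of_abs_le (hM c ⟨hb.1.le.trans hc.1.le, hc.2.le⟩)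
    nlinarith [hb.2]
  have hbound : ∀ b ∈ Ioo a t, ∫ s in a..b, (t - s) ^ (-α) * w' s ≤ M * (t - b) ^ (1 - α) := by
    intro b hb
    have htb : 0 < t - b := sub_pos.2 hb.2
    have hsub : Icc a b ⊆ Icc a t := Icc_subset_Icc_right hb.2.le
    calc ∫ s in a..b, (t - s) ^ (-α) * w' s ≤ (t - b) ^ (-α) * w b :=
          integral_sub_rpow_neg_mul_deriv_le hα0 hb.1.le hb.2 (hw.mono hsub) (hw'.mono hsub)
            (fun s hs => hderiv s ⟨hs.1, hs.2.trans hb.2⟩) fun s hs => hnonneg s (hsub hs)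
      _ ≤ (t - b) ^ (-α) * (M * (t - b)) :=
          mul_le_mul_of_nonneg_left (hlinear b hb) (Real.rpow_nonneg htb.le _)
      _ = M * (t - b) ^ (1 - α) := by
          rw [show 1 - α = -α + 1 by ring, Real.rpow_add htb, Real.rpow_one]; ring
  have hprimitive : Tendsto (fun b => ∫ s in a..b, (t - s) ^ (-α) * w' s) (𝓝[<] t)
      (𝓝 (∫ s in a..t, (t - s) ^ (-α) * w' s)) := by
    have hint := intervalIntegrable_sub_rpow_neg_smul hα1 (by rwa [uIcc_of_le hat.le])
    refine ((continuousOn_primitive_interval' hint left_mem_uIcc) t right_mem_uIcc)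
      |>.mono_of_mem_nhdsWithin ?_ |>.tendsto
    exact mem_of_superset (Ioo_mem_nhdsLT hat) (Ioo_subset_Icc_self.trans Icc_subset_uIcc)
  have hvanish : Tendsto (fun b => M * (t - b) ^ (1 - α)) (𝓝[<] t) (𝓝 0) := by
    have hcont : Continuous fun b : ℝ => M * (t - b) ^ (1 - α) := by
      fun_prop (disch := linarith)
    simpa [Real.zero_rpow (by linarith : 1 - α ≠ 0)] using
      (hcont.tendsto t).mono_left nhdsWithin_le_nhds
  exact le_of_tendsto_of_tendsto hprimitive hvanish
    (eventually_of_mem (Ioo_mem_nhdsLT hat) hbound)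

theorem integral_sub_rpow_neg_mul_inner_deriv_le {H : Type*} [NormedAddCommGroup H]
    [InnerProductSpace ℝ H] [CompleteSpace H] (hα0 : 0 ≤ α) (hα1 : α < 1) (hat : a < t)
    {u u' : ℝ → H} (hu : ContinuousOn u (Icc a t)) (hu' : ContinuousOn u' (Icc a t))
    (hderiv : ∀ s ∈ Ioo a t, HasDerivAt u (u' s) s) :
    ∫ s in a..t, (t - s) ^ (-α) * ⟪u s, u' s⟫ ≤ ⟪u t, ∫ s in a..t, (t - s) ^ (-α) • u' s⟫ := by
  have hIcc : uIcc a t = Icc a t := uIcc_of_le hat.le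
  have hdist := integral_sub_rpow_neg_mul_deriv_nonpos hα0 hα1 hat
    (w := fun s => ‖u s - u t‖ ^ 2) (w' := fun s => 2 * ⟪u s - u t, u' s⟫)
    ((hu.sub continuousOn_const).norm.pow 2)
    (continuousOn_const.mul ((hu.sub continuousOn_const).inner hu'))
    (fun s hs => ((hderiv s hs).sub_const (u t)).norm_sq) (fun _ _ => by positivity) (by simp)
  have hint : ∀ {f : ℝ → ℝ}, ContinuousOn f (Icc a t) →
      IntervalIntegrable (fun s => (t - s) ^ (-α) * f s) volume a t := fun hf =>
    intervalIntegrable_sub_rpow_neg_smul hα1 (hIcc ▸ hf)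
  have hcomm := (innerSL ℝ (u t)).intervalIntegral_comp_comm
    (intervalIntegrable_sub_rpow_neg_smul hα1 (hIcc ▸ hu'))
  simp only [innerSL_apply_apply, inner_smul_right] at hcomm
  have hsplit : ∫ s in a..t, (t - s) ^ (-α) * (2 * ⟪u s - u t, u' s⟫) =
      2 * ((∫ s in a..t, (t - s) ^ (-α) * ⟪u s, u' s⟫) -
        ∫ s in a..t, (t - s) ^ (-α) * ⟪u t, u' s⟫) := by
    rw [← integral_sub (hint (hu.inner hu')) (hint (continuousOn_const.inner hu')),
      ← intervalIntegral.integral_const_mul]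
    congr 1 with s
    rw [inner_sub_left]
    ring
  rw [← hcomm]
  linarith

end CaputoKernel

/-- For `α ∈ (0,1)`, a real Hilbert space `H` and a continuously differentiable
`v : [0,T] → H`, one has `(v(t), D_t^α v(t))_H ≥ (1/2) D_t^α |v(t)|_H²`
for all `t ∈ (0,T]`. -/
theorem inner_caputoDeriv_ge {H : Type*} [NormedAddCommGroup H] [InnerProductSpace ℝ H]
    [CompleteSpace H]
    (α T : ℝ) (hα : α ∈ Set.Ioo (0:ℝ) 1) (hT : 0 < T)
    (v : ℝ → H) (hv : ContDiffOn ℝ 1 v (Set.Icc 0 T)) (t : ℝ) (ht : t ∈ Set.Ioc 0 T) :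
    ⟪v t, caputoDerivVec α v t⟫ ≥ (1 / 2) * caputoDeriv α (fun s => ‖v s‖ ^ 2) t := by
  set v' := derivWithin v (Icc 0 T)
  have hsub : Icc 0 t ⊆ Icc 0 T := Icc_subset_Icc_right ht.2
  have hv' : ContinuousOn v' (Icc 0 t) :=
    (hv.continuousOn_derivWithin (uniqueDiffOn_Icc hT) le_rfl).mono hsub
  have hderiv : ∀ s ∈ Ioo 0 t, HasDerivAt v (v' s) s := fun s hs => by
    have hnhds : Icc 0 T ∈ 𝓝 s := Icc_mem_nhds hs.1 (hs.2.trans_le ht.2)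
    rw [show v' s = deriv v s from derivWithin_of_mem_nhds hnhds]
    exact ((hv.contDiffAt hnhds).differentiableAt one_ne_zero).hasDerivAt
  have hvec : caputoDerivVec α v t =
      (Real.Gamma (1 - α))⁻¹ • ∫ s in (0:ℝ)..t, (t - s) ^ (-α) • v' s := by
    rw [caputoDerivVec, integral_congr_Ioo_of_le ht.1.le fun s hs => by rw [(hderiv s hs).deriv]]
  have hscalar : caputoDeriv α (fun s => ‖v s‖ ^ 2) t =
      (Real.Gamma (1 - α))⁻¹ * ∫ s in (0:ℝ)..t, (t - s) ^ (-α) * (2 * ⟪v s, v' s⟫) := by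
    rw [caputoDeriv,
      integral_congr_Ioo_of_le ht.1.le fun s hs => by rw [(hderiv s hs).norm_sq.deriv]]
  have hkey := integral_sub_rpow_neg_mul_inner_deriv_le hα.1.le hα.2 ht.1
    (hv.continuousOn.mono hsub) hv' hderiv
  have hΓ : 0 < (Real.Gamma (1 - α))⁻¹ := inv_pos.2 (Real.Gamma_pos_of_pos (by linarith [hα.2]))
  rw [hvec, hscalar, inner_smul_right, ge_iff_le]
  simp only [mul_left_comm _ (2 : ℝ), intervalIntegral.integral_const_mul]
  linarith [mul_le_mul_of_nonneg_left hkey hΓ.le]
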